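/- Let f be μ-strongly convex and L-smooth, g proper convex lsc, 0 < s ≤ 1/L, x* a minimizer of F = f+g. Then for any x ∈ H: ⟨s G_s(x), x - x*⟩ ≥ ((2-sL)/2)‖s G_s(x)‖² + (μs/2)‖x - x*‖², where G_s(x) = (x - prox_{sg}(x - s∇f(x)))/s. -/

import Mathlib

open scoped RealInnerProductSpace
open Filter Set Topology

section Helpers

variable {H : Type*} [NormedAddCommGroup H] [InnerProductSpace ℝ H] [CompleteSpace H]

/-- limit helper: if a ≤ b + t*c for all small positive t, then a ≤ b -/
lemma aux_limit (a b c : ℝ) (h : ∀ t : ℝ, 0 < t → t < 1 → a ≤ b + t * c) : a ≤ b := by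
  have htend : Tendsto (fun t : ℝ => b + t * c) (𝓝[>] (0:ℝ)) (𝓝 b) := by
    have : Tendsto (fun t : ℝ => b + t * c) (𝓝 (0:ℝ)) (𝓝 (b + 0 * c)) := by
      exact (tendsto_const_nhds.add ((tendsto_id).mul tendsto_const_nhds))
    simpa using this.mono_left nhdsWithin_le_nhds
  refine ge_of_tendsto htend ?_
  filter_upwards [Ioo_mem_nhdsGT_of_mem (by constructor <;> norm_num : (0:ℝ) ∈ Ico (0:ℝ) 1)]
    with t ht
  exact h t ht.1 ht.2

/-- derivative of the line map -/
lemma hasDerivAt_line (x d : H) (t : ℝ) : HasDerivAt (fun t : ℝ => x + t • d) d t := by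
  simpa using ((hasDerivAt_id t).smul_const d).const_add x

/-- derivative of h along a line, given gradient -/
lemma hasDerivAt_comp_line {h : H → ℝ} {h' : H} (x d : H) (t : ℝ)
    (hd : HasGradientAt h h' (x + t • d)) :
    HasDerivAt (fun t : ℝ => h (x + t • d)) ⟪h', d⟫ t := by
  have := hd.hasFDerivAt.comp_hasDerivAt t (hasDerivAt_line x d t)
  exact this

/-- first-order lower bound for convex functions with gradient at x -/
lemma convex_grad_lower {h : H → ℝ} {h' : H} {x : H}
    (hc : ConvexOn ℝ Set.univ h) (hd : HasGradientAt h h' x) (y : H) :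
    h x + ⟪h', y - x⟫ ≤ h y := by
  set d := y - x with hdef
  have hx0 : x + (0:ℝ) • d = x := by simp
  have hψ : HasDerivAt (fun t : ℝ => h (x + t • d)) ⟪h', d⟫ 0 :=
    hasDerivAt_comp_line x d 0 (by simpa [hx0] using hd)
  have htend : Tendsto (slope (fun t : ℝ => h (x + t • d)) 0) (𝓝[>] (0:ℝ)) (𝓝 ⟪h', d⟫) := by
    have := hasDerivAt_iff_tendsto_slope.1 hψ
    exact this.mono_left (nhdsWithin_mono 0 (fun t ht => ne_of_gt ht))
  have hub : ⟪h', d⟫ ≤ h y - h x := by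
    refine le_of_tendsto htend ?_
    filter_upwards [Ioo_mem_nhdsGT_of_mem (by constructor <;> norm_num : (0:ℝ) ∈ Ico (0:ℝ) 1)]
      with t ht
    have hcomb : x + t • d = (1 - t) • x + t • y := by
      rw [hdef]; module
    have hineq := hc.2 (mem_univ x) (mem_univ y) (by linarith [ht.2] : (0:ℝ) ≤ 1 - t)
      (le_of_lt ht.1) (by ring)
    simp only [smul_eq_mul] at hineq
    rw [slope_def_field, sub_zero, div_le_iff₀ ht.1, hx0, hcomb]
    nlinarith [hineq]
  linarith

/-- monotone gradient implies convexity -/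
lemma convexOn_of_monotone_grad {q : H → ℝ} {q' : H → H}
    (hd : ∀ z, HasGradientAt q (q' z) z)
    (hm : ∀ z w, 0 ≤ ⟪q' z - q' w, z - w⟫) : ConvexOn ℝ Set.univ q := by
  refine ⟨convex_univ, ?_⟩
  intro x _ y _ a b ha hb hab
  set d := y - x with hdef
  set ψ : ℝ → ℝ := fun t => q (x + t • d) with hψdef
  have hψ : ∀ t : ℝ, HasDerivAt ψ ⟪q' (x + t • d), d⟫ t :=
    fun t => hasDerivAt_comp_line x d t (hd _)
  have hdiffψ : Differentiable ℝ ψ := fun t => (hψ t).differentiableAt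
  have hderiv : deriv ψ = fun t => ⟪q' (x + t • d), d⟫ := funext fun t => (hψ t).deriv
  have hmono : Monotone (deriv ψ) := by
    rw [hderiv]
    intro t₁ t₂ hle
    dsimp only
    rcases eq_or_lt_of_le hle with rfl | hlt
    · exact le_rfl
    · have hzw := hm (x + t₂ • d) (x + t₁ • d)
      have hdiffpt : (x + t₂ • d) - (x + t₁ • d) = (t₂ - t₁) • d := by module
      rw [hdiffpt, real_inner_smul_right] at hzw
      have h1 : 0 ≤ ⟪q' (x + t₂ • d) - q' (x + t₁ • d), d⟫ :=
        le_of_mul_le_mul_left (by simpa using hzw) (sub_pos.2 hlt)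
      rw [inner_sub_left] at h1
      linarith
  have hconv : ConvexOn ℝ Set.univ ψ := hmono.convexOn_univ_of_deriv hdiffψ
  have := hconv.2 (mem_univ (0:ℝ)) (mem_univ (1:ℝ)) ha hb hab
  simp only [smul_eq_mul, mul_zero, mul_one, zero_add] at this
  have h0 : ψ 0 = q x := by simp [hψdef]
  have h1 : ψ 1 = q y := by simp [hψdef, hdef]
  have hb' : ψ b = q (a • x + b • y) := by
    have : x + b • d = a • x + b • y := by
      rw [hdef]
      have : a = 1 - b := by linarith
      rw [this]; module
    simp [hψdef, this]
  rw [h0, h1, hb'] at this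
  simpa using this

end Helpers

section Helpers2
variable {H : Type*} [NormedAddCommGroup H] [InnerProductSpace ℝ H] [CompleteSpace H]

lemma hasGradientAt_const_normSq (c : ℝ) (z : H) :
    HasGradientAt (fun w : H => c / 2 * ‖w‖ ^ 2) (c • z) z := by
  have h1 : HasFDerivAt (fun w : H => ‖w‖ ^ 2) (2 • innerSL ℝ z) z :=
    (hasStrictFDerivAt_norm_sq z).hasFDerivAt
  have h2 : HasFDerivAt (fun w : H => c / 2 * ‖w‖ ^ 2) ((c / 2) • (2 • innerSL ℝ z)) z :=
    h1.const_mul (c / 2)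
  rw [hasGradientAt_iff_hasFDerivAt]
  refine h2.congr_fderiv ?_
  ext y
  simp [real_inner_smul_left, InnerProductSpace.toDual_apply_apply]
  ring

lemma grad_sub_normSq {f : H → ℝ} {f' : H → H} (hdiff : ∀ w, HasGradientAt f (f' w) w)
    (c : ℝ) (z : H) :
    HasGradientAt (fun w : H => f w - c / 2 * ‖w‖ ^ 2) (f' z - c • z) z := by
  have := (hdiff z).hasFDerivAt.sub (hasGradientAt_const_normSq c z).hasFDerivAt
  rw [hasGradientAt_iff_hasFDerivAt]
  refine this.congr_fderiv ?_
  ext y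
  simp [inner_sub_left, InnerProductSpace.toDual_apply_apply]

/-- strong convexity first-order lower bound -/
lemma strong_lower {f : H → ℝ} {f' : H → H} {μ : ℝ} (hf : StrongConvexOn Set.univ μ f)
    (hdiff : ∀ w, HasGradientAt f (f' w) w) (x y : H) :
    f x + ⟪f' x, y - x⟫ + μ / 2 * ‖y - x‖ ^ 2 ≤ f y := by
  have hp : ConvexOn ℝ Set.univ (fun z => f z - μ / 2 * ‖z‖ ^ 2) :=
    strongConvexOn_iff_convex.1 hf
  have key := convex_grad_lower hp (grad_sub_normSq hdiff μ x) y
  simp only [inner_sub_left, real_inner_smul_left] at key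
  have e1 : ‖y - x‖ ^ 2 = ‖y‖ ^ 2 - 2 * ⟪x, y⟫ + ‖x‖ ^ 2 := by
    rw [norm_sub_sq_real]; ring_nf; rw [real_inner_comm]; ring
  have e2 : ⟪x, y - x⟫ = ⟪x, y⟫ - ‖x‖ ^ 2 := by
    rw [inner_sub_right, real_inner_self_eq_norm_sq]
  rw [e2] at key
  rw [e1]
  linarith [key]

/-- descent lemma -/
lemma descent_lemma {f : H → ℝ} {f' : H → H} {L : ℝ}
    (hdiff : ∀ w, HasGradientAt f (f' w) w)
    (hlip : ∀ w v, ‖f' w - f' v‖ ≤ L * ‖w - v‖) (x y : H) :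
    f y ≤ f x + ⟪f' x, y - x⟫ + L / 2 * ‖y - x‖ ^ 2 := by
  set q : H → ℝ := fun z => L / 2 * ‖z‖ ^ 2 - f z with hq
  have hqd : ∀ z, HasGradientAt q (L • z - f' z) z := by
    intro z
    have := (hasGradientAt_const_normSq L z).hasFDerivAt.sub (hdiff z).hasFDerivAt
    rw [hasGradientAt_iff_hasFDerivAt]
    refine this.congr_fderiv ?_
    ext u
    simp [inner_sub_left, InnerProductSpace.toDual_apply_apply]
  have hmono : ∀ z w : H, 0 ≤ ⟪(L • z - f' z) - (L • w - f' w), z - w⟫ := by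
    intro z w
    have hcomb : (L • z - f' z) - (L • w - f' w) = L • (z - w) - (f' z - f' w) := by module
    rw [hcomb, inner_sub_left, real_inner_smul_left, real_inner_self_eq_norm_sq]
    have h1 := real_inner_le_norm (f' z - f' w) (z - w)
    have h2 := hlip z w
    have h3 := norm_nonneg (z - w)
    have h4 := norm_nonneg (f' z - f' w)
    nlinarith
  have hconv : ConvexOn ℝ Set.univ q := convexOn_of_monotone_grad hqd hmono
  have key := convex_grad_lower hconv (hqd x) y
  simp only [hq, inner_sub_left, real_inner_smul_left] at key
  have e1 : ‖y - x‖ ^ 2 = ‖y‖ ^ 2 - 2 * ⟪x, y⟫ + ‖x‖ ^ 2 := by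
    rw [norm_sub_sq_real]; ring_nf; rw [real_inner_comm]; ring
  have e2 : ⟪x, y - x⟫ = ⟪x, y⟫ - ‖x‖ ^ 2 := by
    rw [inner_sub_right, real_inner_self_eq_norm_sq]
  rw [e2] at key
  rw [e1]
  linarith [key]

/-- prox subgradient inequality -/
lemma prox_subgrad {g : H → ℝ} (hg : ConvexOn ℝ Set.univ g) {s : ℝ} (hs : 0 < s)
    {w p : H} (hp : IsMinOn (fun u => g u + 1 / (2 * s) * ‖u - w‖ ^ 2) Set.univ p)
    (z : H) :
    g p + (1 / s) * ⟪w - p, z - p⟫ ≤ g z := by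
  set d := z - p with hdef
  have key : (1 / s) * ⟪w - p, d⟫ ≤ (g z - g p) + 0 := by
    rw [add_zero]
    have haux : ∀ t : ℝ, 0 < t → t < 1 →
        (1 / s) * ⟪w - p, d⟫ ≤ (g z - g p) + t * (‖d‖ ^ 2 / (2 * s)) := by
      intro t ht0 ht1
      have hmin := hp (mem_univ (p + t • d))
      simp only [Set.mem_setOf_eq] at hmin
      have hcomb : p + t • d = (1 - t) • p + t • z := by rw [hdef]; module
      have hcvx := hg.2 (mem_univ p) (mem_univ z) (by linarith : (0:ℝ) ≤ 1 - t)
        (le_of_lt ht0) (by ring)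
      simp only [smul_eq_mul] at hcvx
      rw [hcomb] at hmin
      have hexp : ‖(1 - t) • p + t • z - w‖ ^ 2
          = ‖p - w‖ ^ 2 + 2 * t * ⟪p - w, d⟫ + t ^ 2 * ‖d‖ ^ 2 := by
        have : (1 - t) • p + t • z - w = (p - w) + t • d := by rw [hdef]; module
        rw [this, norm_add_sq_real, real_inner_smul_right, norm_smul]
        simp [abs_of_pos ht0]
        ring
      rw [hexp] at hmin
      have hinner : ⟪w - p, d⟫ = -⟪p - w, d⟫ := by
        rw [← inner_neg_left]; congr 1; abel
      rw [hinner]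
      have hmin2 : g p + 1 / (2 * s) * ‖p - w‖ ^ 2 ≤
          (1 - t) * g p + t * g z + 1 / (2 * s) *
          (‖p - w‖ ^ 2 + 2 * t * ⟪p - w, d⟫ + t ^ 2 * ‖d‖ ^ 2) :=
        le_trans hmin (by linarith)
      have step2 : 0 ≤ t * ((g z - g p) + 2 * (1 / (2 * s)) * ⟪p - w, d⟫
          + t * ((1 / (2 * s)) * ‖d‖ ^ 2)) := by nlinarith [hmin2]
      have step3 : 0 ≤ (g z - g p) + 2 * (1 / (2 * s)) * ⟪p - w, d⟫
          + t * ((1 / (2 * s)) * ‖d‖ ^ 2) :=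
        le_of_mul_le_mul_left (by simpa using step2) ht0
      rw [show (1:ℝ)/s = 2*(1/(2*s)) by field_simp,
        show ‖d‖ ^ 2 / (2*s) = 1/(2*s) * ‖d‖ ^ 2 by ring]
      linarith [step3]
    exact aux_limit _ _ _ haux
  linarith [key]

end Helpers2

/-- Lower bound on ⟨s G_s(x), x - x*⟩. -/
theorem prox_grad_inner_lower_bound
    {H : Type*} [NormedAddCommGroup H] [InnerProductSpace ℝ H] [CompleteSpace H]
    (f : H → ℝ) (f' : H → H) (g : H → ℝ) (L μ s : ℝ)
    (hL : 0 < L) (hμ : 0 ≤ μ)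
    (hf : StrongConvexOn Set.univ μ f)
    (hdiff : ∀ w, HasGradientAt f (f' w) w)
    (hlip : ∀ w v, ‖f' w - f' v‖ ≤ L * ‖w - v‖)
    (hg : ConvexOn ℝ Set.univ g) (hg_lsc : LowerSemicontinuous g)
    (hs : 0 < s) (hsL : s ≤ 1 / L)
    (prox : H → H)
    (hprox : ∀ w, IsMinOn (fun u => g u + 1 / (2 * s) * ‖u - w‖ ^ 2) Set.univ (prox w))
    (F : H → ℝ) (hF : ∀ w, F w = f w + g w)
    (Gs : H → H) (hGs : ∀ w, Gs w = (1 / s) • (w - prox (w - s • f' w)))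
    (xstar : H) (hmin : IsMinOn F Set.univ xstar)
    (x : H) :
    ⟪s • Gs x, x - xstar⟫ ≥
      (2 - s * L) / 2 * ‖s • Gs x‖ ^ 2 + μ * s / 2 * ‖x - xstar‖ ^ 2 := by
  have hsne : s ≠ 0 := ne_of_gt hs
  set xp := prox (x - s • f' x) with hxp
  have hv : s • Gs x = x - xp := by
    rw [hGs, smul_smul, mul_one_div_cancel hsne, one_smul]
  have hA := prox_subgrad hg hs (hprox (x - s • f' x)) xstar
  rw [← hxp] at hA
  have hB := strong_lower hf hdiff x xstar
  have hC := descent_lemma hdiff hlip x xp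
  have hD := hmin (Set.mem_univ xp)
  simp only [Set.mem_setOf_eq] at hD
  rw [hF, hF] at hD
  rw [show ‖xstar - x‖ = ‖x - xstar‖ from norm_sub_rev _ _] at hB
  rw [show ‖xp - x‖ = ‖x - xp‖ from norm_sub_rev _ _] at hC
  -- expand the prox inner product
  have split1 : ⟪x - s • f' x - xp, xstar - xp⟫
      = ⟪x - xp, xstar - xp⟫ - s * ⟪f' x, xstar - xp⟫ := by
    rw [show x - s • f' x - xp = (x - xp) - s • f' x from by module, inner_sub_left,
      real_inner_smul_left]
  have split2 : ⟪x - xp, xstar - xp⟫ = ‖x - xp‖ ^ 2 - ⟪x - xp, x - xstar⟫ := by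
    rw [show xstar - xp = (x - xp) - (x - xstar) from by module, inner_sub_right,
      real_inner_self_eq_norm_sq]
  have split3 : ⟪f' x, xstar - xp⟫ = ⟪f' x, xstar - x⟫ - ⟪f' x, xp - x⟫ := by
    rw [← inner_sub_right]; congr 1; module
  rw [split1, split2, split3] at hA
  -- clear the division in hA
  have h1 : (‖x - xp‖ ^ 2 - ⟪x - xp, x - xstar⟫
      - s * (⟪f' x, xstar - x⟫ - ⟪f' x, xp - x⟫)) / s ≤ g xstar - g xp := by
    ring_nf at hA ⊢; linarith
  have hA' := (div_le_iff₀ hs).1 h1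
  have hsum : ⟪f' x, xstar - x⟫ - ⟪f' x, xp - x⟫
      ≤ (g xp - g xstar) - μ / 2 * ‖x - xstar‖ ^ 2 + L / 2 * ‖x - xp‖ ^ 2 := by
    linarith
  have hsum' := mul_le_mul_of_nonneg_left hsum hs.le
  rw [hv]
  nlinarith [hA', hsum']
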